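/- Let F be an algebraically closed field, n ≥ 2, and let s ∈ Sp_{2n}(F) be the diagonal element of the symplectic group whose eigenvalues on the natural 2n-dimensional symplectic module are a₁, …, a_n, a₁⁻¹, …, a_n⁻¹ for given a₁, …, a_n ∈ Fˣ (the pair aᵢ, aᵢ⁻¹ acting on the i-th hyperbolic plane of a symplectic basis). Assume s is non-central (s ≠ ±Id) and non-regular (there exist i ≠ j with aᵢ = a_j or aᵢ·a_j = 1, or there exists i with aᵢ² = 1). Then either (a) n = 2 and, up to permuting and inverting a₁ and a₂, either a₁ = a₂ = a with a² ≠ 1 (s has Jordan form diag(a, a⁻¹, a, a⁻¹) with respect to an ordered symplectic basis (e₁, f₁, e₂, f₂)) or char F ≠ 2 and (a₁, a₂) = (1, −1) (s = ±diag(1, 1, −1, −1)); or (b) there exist subgroups K and Y of Sp_{2n}(F), each normalized by the diagonal maximal torus, such that: every element of K commutes with every element of Y; s commutes with every element of K; s fails to commute with some element of Y; K is isomorphic as an abstract group to SL_2(F); and Y is isomorphic as an abstract group to Sp_{2m}(F) for some m ≥ 1 (where Sp_2(F) = SL_2(F)). -/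

import Mathlib

/-!
Write `eᵢ, fᵢ` for the symplectic basis, indexed by `.inl i` and `.inr i`. For an injection
`τ : κ ↪ ι`, `Sp(κ)` embeds in `Sp(ι)` as the symplectic group of the span of the
`e_{τ k}, f_{τ k}`, acting trivially on the other basis vectors. The image of a subgroup normalized
by the diagonal torus is again normalized by it, the images for disjoint `τ` commute, and the
diagonal `s` commutes with the image of `A` exactly when its restriction to the coordinates of `τ`
commutes with `A`; a non-central diagonal element does not commute with some unipotent
`[[1, S], [0, 1]]`.

If `a_k = ±1`, then `s` is scalar on the `k`-th plane: take `K = Sp₂ ≅ SL₂` on that plane and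
`Y = Sp_{2(n-1)}` on the others, choosing `k` so that `s` is not central there. Otherwise
`aᵢ = a_j` or `aᵢ a_j = 1` for some `i ≠ j`, and `K` is the `SL₂` of the short root `eᵢ - e_j`
(resp. `eᵢ + e_j`) in the `Sp₄` of the planes `i, j`, on whose two invariant Lagrangians
`⟨eᵢ, e_j⟩, ⟨fᵢ, f_j⟩` (resp. `⟨eᵢ, f_j⟩, ⟨e_j, fᵢ⟩`) the element `s` is scalar; `Y` is the `Sp₂`
of a third plane. The exceptional cases are those where the third plane does not exist.
-/

open Matrix

lemma Units.val_eq_val_inv_iff {M : Type*} [Monoid M] {u v : Mˣ} :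
    (u : M) = ((v⁻¹ : Mˣ) : M) ↔ u * v = 1 := by
  rw [Units.val_inj, _root_.mul_eq_one_iff_eq_inv]

lemma Units.sq_eq_one_iff {R : Type*} [Ring R] [NoZeroDivisors R] {u : Rˣ} :
    u ^ 2 = 1 ↔ u = 1 ∨ u = -1 := by
  rw [Units.ext_iff, Units.ext_iff, Units.ext_iff, Units.val_pow_eq_pow_val, Units.val_one,
    Units.val_neg, Units.val_one]
  exact _root_.sq_eq_one_iff

lemma neg_one_ne_one_and_exists_eq_one_and_eq_neg_one {R ι : Type*} [Ring R] [NoZeroDivisors R]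
    {a : ι → Rˣ}
    (hsq : ∀ l, a l ^ 2 = 1) (hnc : ¬ (∀ i, a i = 1) ∧ ¬ (∀ i, a i = -1)) :
    (-1 : Rˣ) ≠ 1 ∧ ∃ i j, i ≠ j ∧ a i = 1 ∧ a j = -1 := by
  obtain ⟨j, hj⟩ := not_forall.1 hnc.1
  obtain ⟨i, hi⟩ := not_forall.1 hnc.2
  have hj' := (Units.sq_eq_one_iff.1 (hsq j)).resolve_left hj
  have hi' := (Units.sq_eq_one_iff.1 (hsq i)).resolve_right hi
  exact ⟨hj' ▸ hj, i, j, by rintro rfl; exact hj hi', hi', hj'⟩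

namespace Function.Embedding

variable {α β : Type*} (R : Type*) [DecidableEq β] [CommRing R]

def toMatrix (σ : α ↪ β) : Matrix α β R := (1 : Matrix β β R).submatrix σ id

variable {R} [Fintype β] (σ : α ↪ β)

lemma toMatrix_mul {γ : Type*} (M : Matrix β γ R) : σ.toMatrix R * M = M.submatrix σ id := by
  ext a y; simp [toMatrix, mul_apply, one_apply]

lemma toMatrix_mul_transpose_toMatrix_of_disjoint {γ : Type*} {τ : γ ↪ β}
    (h : ∀ a c, σ a ≠ τ c) : σ.toMatrix R * (τ.toMatrix R)ᵀ = 0 := by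
  ext a c; rw [toMatrix_mul]; simp [toMatrix, h a c]

variable [DecidableEq α]

lemma toMatrix_mul_transpose : σ.toMatrix R * (σ.toMatrix R)ᵀ = 1 := by
  rw [toMatrix_mul, toMatrix, transpose_submatrix, transpose_one, submatrix_submatrix]
  exact submatrix_one_embedding σ

variable [Fintype α]

lemma toMatrix_mul_diagonal (d : β → R) :
    σ.toMatrix R * diagonal d = diagonal (d ∘ σ) * σ.toMatrix R := by
  ext a x
  simp only [mul_diagonal, diagonal_mul, toMatrix, submatrix_apply, one_apply, id, Function.comp]
  split_ifs with h <;> simp [h]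

lemma diagonal_mul_toMatrix_transpose (d : β → R) :
    diagonal d * (σ.toMatrix R)ᵀ = (σ.toMatrix R)ᵀ * diagonal (d ∘ σ) := by
  rw [← diagonal_transpose, ← transpose_mul, toMatrix_mul_diagonal, transpose_mul,
    diagonal_transpose]

lemma toMatrix_mul_mul_transpose_mul (X : Matrix α α R) :
    σ.toMatrix R * ((σ.toMatrix R)ᵀ * X * σ.toMatrix R) * (σ.toMatrix R)ᵀ = X := by
  simp only [← Matrix.mul_assoc, toMatrix_mul_transpose, Matrix.one_mul]
  rw [Matrix.mul_assoc, toMatrix_mul_transpose, Matrix.mul_one]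

end Function.Embedding

namespace Matrix

variable {α β R : Type*} [CommRing R]

lemma diagonal_mul_eq_mul_diagonal_of_apply_ne_zero {n : Type*} [Fintype n] [DecidableEq n]
    {d : n → R} {M : Matrix n n R} (h : ∀ x y, M x y ≠ 0 → d x = d y) :
    diagonal d * M = M * diagonal d := by
  ext x y
  rw [diagonal_mul, mul_diagonal]
  by_cases hM : M x y = 0
  · simp [hM]
  · rw [h x y hM, mul_comm]

variable [Fintype α] [DecidableEq α] [DecidableEq β]

/-- The matrix acting as `A` on the coordinates `σ a` and as the identity on the others. -/
def extendByOne (σ : α ↪ β) (A : Matrix α α R) : Matrix β β R :=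
  1 + (σ.toMatrix R)ᵀ * (A - 1) * σ.toMatrix R

variable (σ : α ↪ β)

lemma extendByOne_one : extendByOne σ (1 : Matrix α α R) = 1 := by
  simp [extendByOne]

lemma extendByOne_transpose (A : Matrix α α R) : (extendByOne σ A)ᵀ = extendByOne σ Aᵀ := by
  simp [extendByOne, transpose_mul, Matrix.mul_assoc]

variable [Fintype β]

/-- `hl` and `hr` say that `M` preserves the span of the coordinates `σ a`, acting there as `M'`. -/
lemma extendByOne_mul_mul_extendByOne {M : Matrix β β R} {M' : Matrix α α R}
    (hl : σ.toMatrix R * M = M' * σ.toMatrix R)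
    (hr : M * (σ.toMatrix R)ᵀ = (σ.toMatrix R)ᵀ * M') (A B : Matrix α α R) :
    extendByOne σ A * M * extendByOne σ B =
      M + (σ.toMatrix R)ᵀ * (A * M' * B - M') * σ.toMatrix R := by
  rw [extendByOne, extendByOne]
  set P := σ.toMatrix R
  have hP : P * Pᵀ = 1 := σ.toMatrix_mul_transpose
  have hA : Pᵀ * (A - 1) * P * M = Pᵀ * ((A - 1) * M') * P := by
    simp only [Matrix.mul_assoc, hl]
  have hB : M * (Pᵀ * (B - 1) * P) = Pᵀ * (M' * (B - 1)) * P := by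
    simp only [← Matrix.mul_assoc, hr]
  have hAB : Pᵀ * (A - 1) * P * M * (Pᵀ * (B - 1) * P) = Pᵀ * ((A - 1) * M' * (B - 1)) * P := by
    rw [hA]; simp only [Matrix.mul_assoc]
    rw [← Matrix.mul_assoc P, hP, Matrix.one_mul]
  have key : A * M' * B - M' = (A - 1) * M' + M' * (B - 1) + (A - 1) * M' * (B - 1) := by
    noncomm_ring
  simp only [Matrix.mul_add, Matrix.add_mul, Matrix.one_mul, Matrix.mul_one]
  rw [hAB, hA, hB, key]
  simp only [Matrix.mul_add, Matrix.add_mul]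
  abel

lemma extendByOne_mul (A B : Matrix α α R) :
    extendByOne σ (A * B) = extendByOne σ A * extendByOne σ B := by
  have h := extendByOne_mul_mul_extendByOne σ (M := 1) (M' := 1) (by simp) (by simp) A B
  rw [Matrix.mul_one, Matrix.mul_one] at h
  rw [h, extendByOne]

lemma extendByOne_injective : Function.Injective (extendByOne (R := R) σ) := by
  intro A B h
  have := congrArg (fun M => σ.toMatrix R * (M - 1) * (σ.toMatrix R)ᵀ) h
  simpa [extendByOne, σ.toMatrix_mul_mul_transpose_mul] using this

lemma extendByOne_mul_extendByOne_of_disjoint {γ : Type*} [Fintype γ] [DecidableEq γ]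
    {τ : γ ↪ β} (h : ∀ a c, σ a ≠ τ c) (A : Matrix α α R) (B : Matrix γ γ R) :
    extendByOne σ A * extendByOne τ B = extendByOne σ A + extendByOne τ B - 1 := by
  have hστ := σ.toMatrix_mul_transpose_toMatrix_of_disjoint (R := R) h
  simp only [extendByOne, Matrix.mul_add, Matrix.add_mul, Matrix.one_mul, Matrix.mul_one]
  have : (σ.toMatrix R)ᵀ * (A - 1) * σ.toMatrix R * ((τ.toMatrix R)ᵀ * (B - 1) * τ.toMatrix R)
      = 0 := by
    simp only [Matrix.mul_assoc]; rw [← Matrix.mul_assoc (σ.toMatrix R), hστ]; simp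
  rw [this]; abel

lemma extendByOne_commute_of_disjoint {γ : Type*} [Fintype γ] [DecidableEq γ]
    {τ : γ ↪ β} (h : ∀ a c, σ a ≠ τ c) (A : Matrix α α R) (B : Matrix γ γ R) :
    extendByOne σ A * extendByOne τ B = extendByOne τ B * extendByOne σ A := by
  rw [extendByOne_mul_extendByOne_of_disjoint σ h,
    extendByOne_mul_extendByOne_of_disjoint τ (fun c a => (h a c).symm), add_comm (extendByOne σ A)]

lemma diagonal_mul_extendByOne_eq_iff (d : β → R) (A B : Matrix α α R) :
    diagonal d * extendByOne σ A = extendByOne σ B * diagonal d ↔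
      diagonal (d ∘ σ) * A = B * diagonal (d ∘ σ) := by
  have h := extendByOne_mul_mul_extendByOne σ (σ.toMatrix_mul_diagonal d)
    (σ.diagonal_mul_toMatrix_transpose d)
  have hl := h 1 A
  have hr := h B 1
  rw [extendByOne_one, Matrix.one_mul, Matrix.one_mul] at hl
  rw [extendByOne_one, Matrix.mul_one, Matrix.mul_one] at hr
  rw [hl, hr, add_right_inj]
  constructor
  · intro e
    simpa [σ.toMatrix_mul_mul_transpose_mul] using
      congrArg (fun M => σ.toMatrix R * M * (σ.toMatrix R)ᵀ) e
  · intro e; rw [e]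

end Matrix

namespace SymplecticGroup

section

variable {κ ι R : Type*} [DecidableEq ι] [CommRing R]

lemma toMatrix_sumMap (τ : κ ↪ ι) :
    (τ.sumMap τ).toMatrix R = fromBlocks (τ.toMatrix R) 0 0 (τ.toMatrix R) := by
  ext (a | a) (x | x) <;> simp [Function.Embedding.toMatrix, one_apply]

variable [Fintype ι]

lemma diagonal_mem_iff {d : ι ⊕ ι → R} :
    diagonal d ∈ symplecticGroup ι R ↔ ∀ i, d (.inl i) * d (.inr i) = 1 := by
  rw [← Sum.elim_comp_inl_inr d, ← fromBlocks_diagonal, fromBlocks_mem_iff]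
  simp [diagonal_mul_diagonal, ← diagonal_one, diagonal_eq_diagonal_iff]

lemma exists_diagonal_mul_ne_mul_diagonal {d : ι ⊕ ι → R} {i j : ι}
    (h : d (.inl i) ≠ d (.inr j)) : ∃ y : symplecticGroup ι R, diagonal d * y ≠ y * diagonal d := by
  let S : Matrix ι ι R := of fun x y => if (x = i ∧ y = j) ∨ (x = j ∧ y = i) then 1 else 0
  have hS : Sᵀ = S := by
    ext x y; simp only [S, transpose_apply, of_apply]; congr 1; exact propext (by tauto)
  refine ⟨⟨fromBlocks 1 S 0 1, fromBlocks_mem_iff.2 (by simp [hS])⟩, fun e => h ?_⟩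
  simpa [diagonal_mul, mul_diagonal, S] using congrFun (congrFun e (.inl i)) (.inr j)

def NormalizedByDiagonal (H : Subgroup (symplecticGroup ι R)) : Prop :=
  ∀ t : symplecticGroup ι R, (t : Matrix (ι ⊕ ι) (ι ⊕ ι) R).IsDiag → ∀ h ∈ H, t * h * t⁻¹ ∈ H

lemma normalizedByDiagonal_top : NormalizedByDiagonal (⊤ : Subgroup (symplecticGroup ι R)) :=
  fun _ _ _ _ => Subgroup.mem_top _

lemma normalizedByDiagonal_range {G : Type*} [Group G] (φ : G →* symplecticGroup ι R)
    (h : ∀ d : ι ⊕ ι → R, (∀ i, d (.inl i) * d (.inr i) = 1) →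
      ∀ g, ∃ g', diagonal d * φ g = φ g' * diagonal d) :
    NormalizedByDiagonal φ.range := by
  rintro t ht _ ⟨g, rfl⟩
  have htd : (t : Matrix (ι ⊕ ι) (ι ⊕ ι) R) = diagonal t.1.diag := ht.diagonal_diag.symm
  obtain ⟨g', hg'⟩ := h _ (diagonal_mem_iff.1 (htd ▸ t.2)) g
  refine ⟨g', (mul_inv_eq_of_eq_mul (Subtype.ext ?_)).symm⟩
  rw [Submonoid.coe_mul, Submonoid.coe_mul, htd, hg']

variable [Fintype κ] [DecidableEq κ]

lemma toMatrix_sumMap_mul_J (τ : κ ↪ ι) :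
    (τ.sumMap τ).toMatrix R * J ι R = J κ R * (τ.sumMap τ).toMatrix R := by
  simp [toMatrix_sumMap, J, fromBlocks_multiply]

lemma J_mul_toMatrix_sumMap_transpose (τ : κ ↪ ι) :
    J ι R * ((τ.sumMap τ).toMatrix R)ᵀ = ((τ.sumMap τ).toMatrix R)ᵀ * J κ R := by
  simpa [transpose_mul, J_transpose] using congrArg transpose (toMatrix_sumMap_mul_J (R := R) τ)

lemma extendByOne_sumMap_mem (τ : κ ↪ ι) {A : Matrix (κ ⊕ κ) (κ ⊕ κ) R}
    (hA : A ∈ symplecticGroup κ R) : extendByOne (τ.sumMap τ) A ∈ symplecticGroup ι R := by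
  rw [mem_iff] at hA ⊢
  rw [extendByOne_transpose, extendByOne_mul_mul_extendByOne _ (toMatrix_sumMap_mul_J τ)
    (J_mul_toMatrix_sumMap_transpose τ), hA, sub_self, Matrix.mul_zero, Matrix.zero_mul, add_zero]

variable (R) in
/-- `Sp(κ)` acting on the span of `e_{τ k}, f_{τ k}` and trivially on the other basis vectors. -/
def extendByOne (τ : κ ↪ ι) : symplecticGroup κ R →* symplecticGroup ι R where
  toFun A := ⟨Matrix.extendByOne (τ.sumMap τ) A, extendByOne_sumMap_mem τ A.2⟩
  map_one' := Subtype.ext (extendByOne_one _)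
  map_mul' A B := Subtype.ext (extendByOne_mul (τ.sumMap τ) A.1 B.1)

lemma coe_extendByOne (τ : κ ↪ ι) (A : symplecticGroup κ R) :
    (extendByOne R τ A : Matrix (ι ⊕ ι) (ι ⊕ ι) R) = Matrix.extendByOne (τ.sumMap τ) A := rfl

lemma extendByOne_injective (τ : κ ↪ ι) : Function.Injective (extendByOne R τ) :=
  fun _ _ h => Subtype.ext (Matrix.extendByOne_injective _ (congrArg Subtype.val h))

lemma extendByOne_commute_of_disjoint {κ' : Type*} [Fintype κ'] [DecidableEq κ'] {τ : κ ↪ ι}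
    {τ' : κ' ↪ ι} (h : ∀ k l, τ k ≠ τ' l) (A : symplecticGroup κ R) (B : symplecticGroup κ' R) :
    extendByOne R τ A * extendByOne R τ' B = extendByOne R τ' B * extendByOne R τ A :=
  Subtype.ext <| Matrix.extendByOne_commute_of_disjoint _
    (by rintro (k | k) (l | l) <;> simp [h]) _ _

lemma mul_extendByOne_eq_iff (τ : κ ↪ ι) {t : symplecticGroup ι R} {d : ι ⊕ ι → R}
    (ht : (t : Matrix (ι ⊕ ι) (ι ⊕ ι) R) = diagonal d) (A B : symplecticGroup κ R) :
    t * extendByOne R τ A = extendByOne R τ B * t ↔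
      diagonal (d ∘ τ.sumMap τ) * A = B * diagonal (d ∘ τ.sumMap τ) := by
  rw [← diagonal_mul_extendByOne_eq_iff, ← ht, ← coe_extendByOne, ← coe_extendByOne]
  exact Subtype.ext_iff

lemma NormalizedByDiagonal.map_extendByOne {H : Subgroup (symplecticGroup κ R)}
    (hH : NormalizedByDiagonal H) (τ : κ ↪ ι) : NormalizedByDiagonal (H.map (extendByOne R τ)) := by
  rintro t ht _ ⟨A, hA, rfl⟩
  have htd : (t : Matrix (ι ⊕ ι) (ι ⊕ ι) R) = diagonal t.1.diag := ht.diagonal_diag.symm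
  have hd := diagonal_mem_iff.1 (htd ▸ t.2)
  let t' : symplecticGroup κ R :=
    ⟨diagonal (t.1.diag ∘ τ.sumMap τ), diagonal_mem_iff.2 fun k => hd (τ k)⟩
  refine ⟨t' * A * t'⁻¹, hH t' (isDiag_diagonal _) A hA, ?_⟩
  rw [eq_mul_inv_iff_mul_eq, eq_comm, mul_extendByOne_eq_iff τ htd]
  exact congrArg Subtype.val (by group : t' * A = t' * A * t'⁻¹ * t')

end

section

variable {κ R : Type*} [Fintype κ] [DecidableEq κ] [CommRing R]

lemma mem_fin_one_iff {A : Matrix (Fin 1 ⊕ Fin 1) (Fin 1 ⊕ Fin 1) R} :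
    A ∈ symplecticGroup (Fin 1) R ↔ A.det = 1 := by
  have e₀ : (finSumFinEquiv.symm 0 : Fin 1 ⊕ Fin 1) = .inl 0 := rfl
  have e₁ : (finSumFinEquiv.symm 1 : Fin 1 ⊕ Fin 1) = .inr 0 := rfl
  rw [← det_reindex_self finSumFinEquiv, det_fin_two, mem_iff, ← Matrix.ext_iff]
  simp only [Fin.forall_fin_one, Sum.forall, mul_apply, Fintype.sum_sum_type, J,
    Finset.univ_unique, Finset.sum_singleton, transpose_apply, fromBlocks_apply₁₁,
    fromBlocks_apply₁₂, fromBlocks_apply₂₁, fromBlocks_apply₂₂, Matrix.zero_apply,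
    Matrix.neg_apply, one_apply_eq, Fin.default_eq_zero, reindex_apply, submatrix_apply, e₀, e₁]
  constructor
  · rintro ⟨⟨-, h⟩, -⟩
    linear_combination -h
  · intro h
    exact ⟨⟨by ring, by linear_combination -h⟩, by linear_combination h, by ring⟩

variable (R) in
def finOneEquivSL : symplecticGroup (Fin 1) R ≃* SpecialLinearGroup (Fin 2) R where
  toFun A := ⟨reindex finSumFinEquiv finSumFinEquiv (A : Matrix (Fin 1 ⊕ Fin 1) (Fin 1 ⊕ Fin 1) R),
    (det_reindex_self _ _).trans (mem_fin_one_iff.1 A.2)⟩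
  invFun B := ⟨reindex finSumFinEquiv.symm finSumFinEquiv.symm (B : Matrix (Fin 2) (Fin 2) R),
    mem_fin_one_iff.2 ((det_reindex_self _ _).trans B.2)⟩
  left_inv A := Subtype.ext (by simp)
  right_inv B := Subtype.ext (by simp)
  map_mul' A B := Subtype.ext (map_mul (reindexRingEquiv R finSumFinEquiv) A.1 B.1)

variable (κ R) in
/-- The Levi subgroup `GL(κ)` stabilizing the Lagrangian spanned by the `eᵢ`. -/
def levi : GL κ R →* symplecticGroup κ R where
  toFun A := ⟨fromBlocks A 0 0 (↑A⁻¹)ᵀ, fromBlocks_mem_iff.2 (by simp [← transpose_mul])⟩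
  map_one' := by ext1; simp
  map_mul' A B := by ext1; simp [fromBlocks_multiply, transpose_mul]

lemma coe_levi (A : GL κ R) :
    (levi κ R A : Matrix (κ ⊕ κ) (κ ⊕ κ) R) = fromBlocks A 0 0 (↑A⁻¹)ᵀ := rfl

lemma levi_injective : Function.Injective (levi κ R) := by
  intro A B h
  have := congrArg (fun M : symplecticGroup κ R => (M : Matrix (κ ⊕ κ) (κ ⊕ κ) R).toBlocks₁₁) h
  exact Units.ext (by simpa [coe_levi] using this)

lemma diagonal_mul_levi {d : κ ⊕ κ → R} (hl : ∀ k l, d (.inl k) = d (.inl l))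
    (hr : ∀ k l, d (.inr k) = d (.inr l)) (A : GL κ R) :
    diagonal d * levi κ R A = levi κ R A * diagonal d := by
  refine diagonal_mul_eq_mul_diagonal_of_apply_ne_zero fun x y h => ?_
  rcases x with x | x <;> rcases y with y | y
  exacts [hl x y, (h (by simp [coe_levi])).elim, (h (by simp [coe_levi])).elim, hr x y]

lemma normalizedByDiagonal_range_levi_comp_toGL :
    NormalizedByDiagonal ((levi κ R).comp SpecialLinearGroup.toGL).range := by
  refine normalizedByDiagonal_range _ fun d hd g => ?_
  let C : GL κ R := ⟨diagonal (d ∘ .inl), diagonal (d ∘ .inr), by simp [hd], by simp [mul_comm, hd]⟩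
  have hC : (levi κ R C : Matrix (κ ⊕ κ) (κ ⊕ κ) R) = diagonal d := by
    simp [coe_levi, C, fromBlocks_diagonal]
  let g' : SpecialLinearGroup κ R :=
    ⟨C * (g : Matrix κ κ R) * (↑C⁻¹ : Matrix κ κ R), (det_units_conj C g).trans g.2⟩
  refine ⟨g', ?_⟩
  rw [← hC, ← Submonoid.coe_mul, ← Submonoid.coe_mul, MonoidHom.comp_apply, MonoidHom.comp_apply,
    ← map_mul, ← map_mul]
  congr 2
  ext1
  show _ = (C : Matrix κ κ R) * g * (↑C⁻¹ : Matrix κ κ R) * C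
  simp [Matrix.mul_assoc]

/-- The `SL₂` of the root `e₀ + e₁`: `g` acts on both `⟨e₀, f₁⟩` and `⟨e₁, f₀⟩`. -/
def sumRootMatrix (g : Matrix (Fin 2) (Fin 2) R) : Matrix (Fin 2 ⊕ Fin 2) (Fin 2 ⊕ Fin 2) R :=
  fromBlocks (g 0 0 • 1) (g 0 1 • !![0, 1; 1, 0]) (g 1 0 • !![0, 1; 1, 0]) (g 1 1 • 1)

lemma sumRootMatrix_mem (g : SpecialLinearGroup (Fin 2) R) :
    sumRootMatrix (g : Matrix (Fin 2) (Fin 2) R) ∈ symplecticGroup (Fin 2) R := by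
  have hg := g.2
  rw [det_fin_two] at hg
  rw [sumRootMatrix, fromBlocks_mem_iff]
  refine ⟨?_, ?_, ?_⟩ <;> ext i j <;> fin_cases i <;> fin_cases j <;>
    simp [mul_apply, Fin.sum_univ_two, mul_comm] <;> linear_combination hg

variable (R) in
def sumRootSL2 : SpecialLinearGroup (Fin 2) R →* symplecticGroup (Fin 2) R where
  toFun g := ⟨sumRootMatrix g, sumRootMatrix_mem g⟩
  map_one' := by ext1; simp [sumRootMatrix]
  map_mul' g h := by
    ext1
    simp only [sumRootMatrix, Submonoid.coe_mul, fromBlocks_multiply]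
    congr 1 <;> ext i j <;> fin_cases i <;> fin_cases j <;>
      simp [mul_apply, Fin.sum_univ_two] <;> ring

lemma sumRootSL2_injective : Function.Injective (sumRootSL2 R) := by
  intro g h e
  have e' := fun x y => congrFun (congrFun (congrArg Subtype.val e) x) y
  ext i j
  fin_cases i <;> fin_cases j
  · simpa [sumRootSL2, sumRootMatrix] using e' (.inl 0) (.inl 0)
  · simpa [sumRootSL2, sumRootMatrix] using e' (.inl 0) (.inr 1)
  · simpa [sumRootSL2, sumRootMatrix] using e' (.inr 0) (.inl 1)
  · simpa [sumRootSL2, sumRootMatrix] using e' (.inr 0) (.inr 0)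

lemma normalizedByDiagonal_range_sumRootSL2 : NormalizedByDiagonal (sumRootSL2 R).range := by
  refine normalizedByDiagonal_range _ fun d hd g => ?_
  have hg := g.2
  rw [det_fin_two] at hg
  let g' : SpecialLinearGroup (Fin 2) R :=
    ⟨!![g 0 0, d (.inl 0) * d (.inl 1) * g 0 1; d (.inr 0) * d (.inr 1) * g 1 0, g 1 1], by
      rw [det_fin_two_of]
      linear_combination hg - g 0 1 * g 1 0 * d (.inl 1) * d (.inr 1) * hd 0 - g 0 1 * g 1 0 * hd 1⟩
  refine ⟨g', ?_⟩
  ext (x | x) (y | y) <;> fin_cases x <;> fin_cases y <;>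
    simp [sumRootSL2, sumRootMatrix, g', diagonal_mul, mul_diagonal] <;> grind

lemma diagonal_mul_sumRootSL2 {d : Fin 2 ⊕ Fin 2 → R} (h₀ : d (.inl 0) = d (.inr 1))
    (h₁ : d (.inl 1) = d (.inr 0)) (g : SpecialLinearGroup (Fin 2) R) :
    diagonal d * sumRootSL2 R g = sumRootSL2 R g * diagonal d := by
  refine diagonal_mul_eq_mul_diagonal_of_apply_ne_zero fun x y h => ?_
  rcases x with x | x <;> rcases y with y | y <;> fin_cases x <;> fin_cases y <;>
    simp_all [sumRootSL2, sumRootMatrix]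

end

section

variable {ι R : Type*} [Fintype ι] [DecidableEq ι] [CommRing R]

def IsSubsystemPair (s : symplecticGroup ι R) (K Y : Subgroup (symplecticGroup ι R)) : Prop :=
  NormalizedByDiagonal K ∧ NormalizedByDiagonal Y ∧ (∀ k ∈ K, ∀ y ∈ Y, k * y = y * k) ∧
    (∀ k ∈ K, s * k = k * s) ∧ (∃ y ∈ Y, s * y ≠ y * s) ∧
    Nonempty (K ≃* SpecialLinearGroup (Fin 2) R) ∧
    ∃ m : ℕ, 1 ≤ m ∧ Nonempty (Y ≃* symplecticGroup (Fin m) R)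

lemma exists_isSubsystemPair_of_extendByOne {s : symplecticGroup ι R} {d : ι ⊕ ι → R}
    (hs : (s : Matrix (ι ⊕ ι) (ι ⊕ ι) R) = diagonal d) {κ : Type*} [Fintype κ] [DecidableEq κ]
    {m : ℕ} (hm : 1 ≤ m) {τ : κ ↪ ι} {τ' : Fin m ↪ ι} (hττ' : ∀ k l, τ k ≠ τ' l)
    {H : Subgroup (symplecticGroup κ R)} (hH : NormalizedByDiagonal H)
    (eH : H ≃* SpecialLinearGroup (Fin 2) R)
    (hsH : ∀ h ∈ H, diagonal (d ∘ τ.sumMap τ) * h = h * diagonal (d ∘ τ.sumMap τ))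
    {i j : Fin m} (hij : d (.inl (τ' i)) ≠ d (.inr (τ' j))) :
    ∃ K Y, IsSubsystemPair s K Y := by
  refine ⟨H.map (extendByOne R τ), (⊤ : Subgroup _).map (extendByOne R τ'),
    hH.map_extendByOne τ, normalizedByDiagonal_top.map_extendByOne τ', ?_, ?_, ?_,
    ⟨(H.equivMapOfInjective _ (extendByOne_injective τ)).symm.trans eH⟩, m, hm,
    ⟨((⊤ : Subgroup _).equivMapOfInjective _ (extendByOne_injective τ')).symm.trans
      Subgroup.topEquiv⟩⟩
  · rintro _ ⟨A, -, rfl⟩ _ ⟨B, -, rfl⟩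
    exact extendByOne_commute_of_disjoint hττ' A B
  · rintro _ ⟨A, hA, rfl⟩
    exact (mul_extendByOne_eq_iff τ hs A A).2 (hsH A hA)
  · obtain ⟨y, hy⟩ := exists_diagonal_mul_ne_mul_diagonal (d := d ∘ τ'.sumMap τ') hij
    exact ⟨_, ⟨y, Subgroup.mem_top y, rfl⟩, fun e => hy ((mul_extendByOne_eq_iff τ' hs y y).1 e)⟩

lemma exists_isSubsystemPair_of_scalar_plane {n : ℕ} (hn : 2 ≤ n) {s : symplecticGroup (Fin n) R}
    {d : Fin n ⊕ Fin n → R} (hs : (s : Matrix (Fin n ⊕ Fin n) (Fin n ⊕ Fin n) R) = diagonal d)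
    {k : Fin n} (hk : d (.inl k) = d (.inr k)) {i j : Fin n} (hik : i ≠ k) (hjk : j ≠ k)
    (hij : d (.inl i) ≠ d (.inr j)) :
    ∃ K Y, IsSubsystemPair s K Y := by
  obtain ⟨m, rfl⟩ : ∃ m, n = m + 1 := ⟨n - 1, by omega⟩
  obtain ⟨i, rfl⟩ := Fin.exists_succAbove_eq hik
  obtain ⟨j, rfl⟩ := Fin.exists_succAbove_eq hjk
  refine exists_isSubsystemPair_of_extendByOne hs (by omega)
    (τ := ⟨fun _ : Fin 1 => k, Function.injective_of_subsingleton _⟩) (τ' := k.succAboveEmb)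
    (fun _ l => (Fin.succAbove_ne k l).symm) normalizedByDiagonal_top
    (Subgroup.topEquiv.trans (finOneEquivSL R))
    (fun _ _ => diagonal_mul_eq_mul_diagonal_of_apply_ne_zero ?_) hij
  rintro (x | x) (y | y) - <;> simp [hk]

lemma exists_isSubsystemPair_of_two_planes {n : ℕ} {s : symplecticGroup (Fin n) R}
    {d : Fin n ⊕ Fin n → R} (hs : (s : Matrix (Fin n ⊕ Fin n) (Fin n ⊕ Fin n) R) = diagonal d)
    {i j k : Fin n} (hij : i ≠ j) (hki : k ≠ i) (hkj : k ≠ j) (hk : d (.inl k) ≠ d (.inr k))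
    {H : Subgroup (symplecticGroup (Fin 2) R)} (hH : NormalizedByDiagonal H)
    (eH : H ≃* SpecialLinearGroup (Fin 2) R)
    (hsH : ∀ h ∈ H, diagonal (d ∘ Sum.map ![i, j] ![i, j]) * h =
      h * diagonal (d ∘ Sum.map ![i, j] ![i, j])) :
    ∃ K Y, IsSubsystemPair s K Y := by
  refine exists_isSubsystemPair_of_extendByOne hs le_rfl (τ := ⟨![i, j], by simp [hij]⟩)
    (τ' := ⟨fun _ : Fin 1 => k, Function.injective_of_subsingleton _⟩) ?_ hH eH hsH
    (i := 0) (j := 0) hk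
  intro x _
  fin_cases x <;> simp [hki.symm, hkj.symm]

section Units

variable {n : ℕ} {a : Fin n → Rˣ} {s : symplecticGroup (Fin n) R}

lemma exists_isSubsystemPair_of_sq_eq_one (hn : 2 ≤ n)
    (hs : (s : Matrix (Fin n ⊕ Fin n) (Fin n ⊕ Fin n) R) =
      diagonal (Sum.elim (fun i => (a i : R)) (fun i => (((a i)⁻¹ : Rˣ) : R))))
    {k : Fin n} (hk : a k ^ 2 = 1) {i j : Fin n} (hik : i ≠ k) (hjk : j ≠ k) (hij : a i * a j ≠ 1) :
    ∃ K Y, IsSubsystemPair s K Y :=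
  exists_isSubsystemPair_of_scalar_plane hn hs (Units.val_eq_val_inv_iff.2 (by rwa [← sq])) hik hjk
    (Units.val_eq_val_inv_iff.not.2 hij)

lemma exists_isSubsystemPair_of_eq
    (hs : (s : Matrix (Fin n ⊕ Fin n) (Fin n ⊕ Fin n) R) =
      diagonal (Sum.elim (fun i => (a i : R)) (fun i => (((a i)⁻¹ : Rˣ) : R))))
    {i j k : Fin n} (hij : i ≠ j) (hki : k ≠ i) (hkj : k ≠ j) (hk : a k ^ 2 ≠ 1) (h : a i = a j) :
    ∃ K Y, IsSubsystemPair s K Y := by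
  refine exists_isSubsystemPair_of_two_planes hs hij hki hkj
    (Units.val_eq_val_inv_iff.not.2 (by rwa [← sq])) normalizedByDiagonal_range_levi_comp_toGL
    (MonoidHom.ofInjective fun _ _ e =>
      SpecialLinearGroup.toGL_injective (levi_injective e)).symm ?_
  rintro _ ⟨g, rfl⟩
  exact diagonal_mul_levi (by intro x y; fin_cases x <;> fin_cases y <;> simp [h])
    (by intro x y; fin_cases x <;> fin_cases y <;> simp [h]) _

lemma exists_isSubsystemPair_of_mul_eq_one
    (hs : (s : Matrix (Fin n ⊕ Fin n) (Fin n ⊕ Fin n) R) =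
      diagonal (Sum.elim (fun i => (a i : R)) (fun i => (((a i)⁻¹ : Rˣ) : R))))
    {i j k : Fin n} (hij : i ≠ j) (hki : k ≠ i) (hkj : k ≠ j) (hk : a k ^ 2 ≠ 1)
    (h : a i * a j = 1) : ∃ K Y, IsSubsystemPair s K Y := by
  refine exists_isSubsystemPair_of_two_planes hs hij hki hkj
    (Units.val_eq_val_inv_iff.not.2 (by rwa [← sq])) normalizedByDiagonal_range_sumRootSL2
    (MonoidHom.ofInjective sumRootSL2_injective).symm ?_
  rintro _ ⟨g, rfl⟩
  exact diagonal_mul_sumRootSL2 (Units.val_eq_val_inv_iff.2 h)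
    (Units.val_eq_val_inv_iff.2 (by rwa [mul_comm])) _

end Units

end

end SymplecticGroup

open SymplecticGroup

theorem Spn_nonregular_commuting_subsystem_subgroups
    {F : Type*} [Field F] {n : ℕ} (hn : 2 ≤ n)
    (a : Fin n → Fˣ) (s : Matrix.symplecticGroup (Fin n) F)
    (hs : (s : Matrix (Fin n ⊕ Fin n) (Fin n ⊕ Fin n) F) =
      Matrix.diagonal (Sum.elim (fun i => (a i : F)) (fun i => (((a i)⁻¹ : Fˣ) : F))))
    (hnoncentral : ¬ (∀ i, a i = 1) ∧ ¬ (∀ i, a i = -1))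
    (hnonregular : (∃ i j, i ≠ j ∧ (a i = a j ∨ a i * a j = 1)) ∨ ∃ i, (a i) ^ 2 = 1) :
    (n = 2 ∧
      ((∃ b : Fˣ, b ^ 2 ≠ 1 ∧ ∀ i, a i = b ∨ a i = b⁻¹) ∨
       (ringChar F ≠ 2 ∧ ∃ i j, i ≠ j ∧ a i = 1 ∧ a j = -1))) ∨
    (∃ K Y : Subgroup (Matrix.symplecticGroup (Fin n) F),
      (∀ t : Matrix.symplecticGroup (Fin n) F,
        (t : Matrix (Fin n ⊕ Fin n) (Fin n ⊕ Fin n) F).IsDiag →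
          ∀ k ∈ K, t * k * t⁻¹ ∈ K) ∧
      (∀ t : Matrix.symplecticGroup (Fin n) F,
        (t : Matrix (Fin n ⊕ Fin n) (Fin n ⊕ Fin n) F).IsDiag →
          ∀ y ∈ Y, t * y * t⁻¹ ∈ Y) ∧
      (∀ k ∈ K, ∀ y ∈ Y, k * y = y * k) ∧
      (∀ k ∈ K, s * k = k * s) ∧
      (∃ y ∈ Y, s * y ≠ y * s) ∧
      Nonempty (K ≃* Matrix.SpecialLinearGroup (Fin 2) F) ∧
      (∃ m : ℕ, 1 ≤ m ∧ Nonempty (Y ≃* Matrix.symplecticGroup (Fin m) F))) := by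
  by_cases hsq : ∀ l, a l ^ 2 = 1
  · obtain ⟨hne, i, j, hij, hi, hj⟩ :=
      neg_one_ne_one_and_exists_eq_one_and_eq_neg_one hsq hnoncentral
    rcases hn.eq_or_lt with rfl | hn
    · refine Or.inl ⟨rfl, Or.inr ⟨?_, i, j, hij, hi, hj⟩⟩
      rw [ne_eq, ← neg_one_eq_one_iff]
      exact fun h => hne (Units.ext h)
    obtain ⟨k, hki, hkj⟩ := Fin.exists_ne_and_ne_of_two_lt i j hn
    exact Or.inr (exists_isSubsystemPair_of_sq_eq_one hn.le hs (hsq k) hki.symm hkj.symm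
      (by rwa [hi, hj, one_mul]))
  obtain ⟨l, hl⟩ := not_forall.1 hsq
  by_cases hk : ∃ k, a k ^ 2 = 1
  · obtain ⟨k, hk⟩ := hk
    have hlk : l ≠ k := by rintro rfl; exact hl hk
    exact Or.inr (exists_isSubsystemPair_of_sq_eq_one hn hs hk hlk hlk (by rwa [← sq]))
  replace hk : ∀ k, a k ^ 2 ≠ 1 := fun k h => hk ⟨k, h⟩
  obtain ⟨i, j, hij, hrel⟩ := hnonregular.resolve_right (not_exists.2 hk)
  rcases hn.eq_or_lt with rfl | hn
  · refine Or.inl ⟨rfl, Or.inl ⟨a i, hk i, fun l => ?_⟩⟩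
    obtain rfl | rfl : l = i ∨ l = j := by omega
    exacts [Or.inl rfl, hrel.imp Eq.symm eq_inv_of_mul_eq_one_right]
  obtain ⟨k, hki, hkj⟩ := Fin.exists_ne_and_ne_of_two_lt i j hn
  exact Or.inr (hrel.elim (exists_isSubsystemPair_of_eq hs hij hki hkj (hk k))
    (exists_isSubsystemPair_of_mul_eq_one hs hij hki hkj (hk k)))
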